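/- (Correctness of the Circles protocol for relative majority) Let k ≥ 1, n ≥ 1, and consider an n-agent computation of the full Circles protocol with a weakly fair schedule and input coloring c : Fin n → Fin k. Suppose μ ∈ Fin k is the unique color in relative majority, i.e., |{a : c a = j}| < |{a : c a = μ}| for every j ≠ μ. Then there exists T ∈ ℕ such that for all t ≥ T and every agent a, the out component of the state of a at time t equals μ. -/

import Mathlib

/-- The weight of a braket `(i,j)`: `k` if `i = j`, otherwise the representative
in `{1,…,k−1}` of `(j − i) mod k`. -/
def weight (k : ℕ) (p : Fin k × Fin k) : ℕ :=
  if p.1 = p.2 then k else (p.2.val + k - p.1.val) % k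

lemma modk {k : ℕ} (hk : 0 < k) (x : ℕ) (hx : x < 2*k) :
    x % k = if x < k then x else x - k := by
  split_ifs with h
  · exact Nat.mod_eq_of_lt h
  · rw [Nat.mod_eq_sub_mod (by omega), Nat.mod_eq_of_lt (by omega)]

lemma weight_pos {k : ℕ} (hk : 0 < k) (p : Fin k × Fin k) : 1 ≤ weight k p := by
  rcases p with ⟨i, j⟩
  simp only [weight]
  split_ifs with h
  · omega
  · have hi := i.isLt; have hj := j.isLt
    have hne : i.val ≠ j.val := fun hv => h (Fin.ext hv)
    rw [modk hk _ (by omega)]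
    split_ifs <;> omega

lemma weight_le {k : ℕ} (hk : 0 < k) (p : Fin k × Fin k) : weight k p ≤ k := by
  rcases p with ⟨i, j⟩
  simp only [weight]
  split_ifs with h
  · exact le_refl k
  · exact le_of_lt (Nat.mod_lt _ hk)

lemma weight_lt {k : ℕ} (hk : 0 < k) {i j : Fin k} (h : i ≠ j) :
    weight k (i, j) < k := by
  simp only [weight]
  rw [if_neg h]
  exact Nat.mod_lt _ hk

lemma weight_eq_of_ne {k : ℕ} {i j : Fin k} (h : i ≠ j) :
    weight k (i, j) = (j.val + k - i.val) % k := by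
  simp only [weight]; rw [if_neg h]

lemma weight_modeq {k : ℕ} (hk : 0 < k) (i j : Fin k) :
    weight k (i, j) ≡ (j.val + k - i.val) [MOD k] := by
  simp only [weight]
  split_ifs with h
  · subst h
    have hi := i.isLt
    have he : i.val + k - i.val = k := by omega
    rw [he]
  · exact Nat.mod_modEq _ _


lemma min_max_sq (a b : ℕ) :
    min a b * min a b + max a b * max a b = a*a + b*b := by
  rcases le_total a b with h|h
  · rw [min_eq_left h, max_eq_right h]
  · rw [min_eq_right h, max_eq_left h, Nat.add_comm]

lemma sq_spread {m' M' m M : ℕ} (hsum : m' + M' = m + M) (hlt : m' < m)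
    (hmM : m ≤ M) : m*m + M*M < m'*m' + M'*M' := by
  have hd : ∃ d, m = m' + d ∧ M' = M + d ∧ 1 ≤ d := ⟨m - m', by omega, by omega, by omega⟩
  obtain ⟨d, rfl, rfl, hd1⟩ := hd
  nlinarith [hlt, hmM, hd1]

lemma sub_add_sub (A a B b : ℕ) (h1 : a ≤ A) (h2 : b ≤ B) :
    A - a + (B - b) = A + B - (a + b) := by omega

lemma nat_aux (P P' sq sq' B : ℕ) (h1 : P' + (B+1) ≤ P) (h2 : sq ≤ B) :
    P' - sq' < P - sq := by omega

lemma nat_aux2 (P sq sq' : ℕ) (h : sq < sq') (h2 : sq' ≤ P) :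
    P - sq' < P - sq := by omega

/-- Core: a triggered swap strictly decreases the potential contribution. -/
lemma swap_potential {k w1 w2 w1' w2' : ℕ}
    (h1 : 1 ≤ w1) (h1k : w1 ≤ k) (h2 : 1 ≤ w2) (h2k : w2 ≤ k)
    (h1' : 1 ≤ w1') (h1k' : w1' ≤ k) (h2' : 1 ≤ w2') (h2k' : w2' ≤ k)
    (hmod : w1' + w2' ≡ w1 + w2 [MOD k])
    (hmin : min w1' w2' < min w1 w2) :
    (2*k*k+1)*w1' - w1'*w1' + ((2*k*k+1)*w2' - w2'*w2')
      < (2*k*k+1)*w1 - w1*w1 + ((2*k*k+1)*w2 - w2*w2) := by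
  have hk : 0 < k := le_trans h1 h1k
  have hsle : w1' + w2' ≤ w1 + w2 := by
    by_contra hcon
    push_neg at hcon
    have hdvd : (k:ℤ) ∣ ((w1 + w2 : ℕ) : ℤ) - ((w1' + w2' : ℕ) : ℤ) := hmod.dvd
    have hdvd2 : (k:ℤ) ∣ ((w1' + w2' : ℕ) : ℤ) - ((w1 + w2 : ℕ) : ℤ) := by
      have := dvd_neg.mpr hdvd
      rwa [neg_sub] at this
    have hge : (k:ℤ) ≤ ((w1' + w2' : ℕ) : ℤ) - ((w1 + w2 : ℕ) : ℤ) :=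
      Int.le_of_dvd (by push_cast; omega) hdvd2
    have e1 : min w1' w2' + max w1' w2' = w1' + w2' := min_add_max _ _
    have e2 : max w1' w2' ≤ k := max_le h1k' h2k'
    have e4 : 1 ≤ min w1 w2 := le_min h1 h2
    omega
  have hkk : k ≤ 2*k*k+1 := by nlinarith
  have hb : ∀ w, 1 ≤ w → w ≤ k → w*w ≤ (2*k*k+1)*w := by
    intro w hw hwk
    calc w*w ≤ k*w := Nat.mul_le_mul_right _ hwk
      _ ≤ (2*k*k+1)*w := Nat.mul_le_mul_right _ hkk
  have hb1 := hb _ h1' h1k'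
  have hb2 := hb _ h2' h2k'
  have hb3 := hb _ h1 h1k
  have hb4 := hb _ h2 h2k
  rw [sub_add_sub _ _ _ _ hb1 hb2, sub_add_sub _ _ _ _ hb3 hb4,
    ← Nat.mul_add, ← Nat.mul_add]
  rcases Nat.lt_or_ge (w1' + w2') (w1 + w2) with hlt | hge
  · refine nat_aux _ _ _ _ (2*k*k) ?_ ?_
    · calc (2*k*k+1) * (w1' + w2') + (2*k*k+1)
          = (2*k*k+1) * (w1' + w2' + 1) := by ring
        _ ≤ (2*k*k+1) * (w1 + w2) := Nat.mul_le_mul_left _ (by omega)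
    · nlinarith
  · have hseq : w1' + w2' = w1 + w2 := le_antisymm hsle hge
    rw [hseq]
    refine nat_aux2 _ _ _ ?_ ?_
    · have hsum : min w1' w2' + max w1' w2' = min w1 w2 + max w1 w2 := by
        rw [min_add_max, min_add_max]; exact hseq
      have := sq_spread hsum hmin (min_le_max)
      rwa [min_max_sq, min_max_sq] at this
    · calc w1'*w1' + w2'*w2' ≤ (2*k*k+1)*w1' + (2*k*k+1)*w2' := Nat.add_le_add hb1 hb2
        _ = (2*k*k+1)*(w1'+w2') := by ring
        _ = (2*k*k+1)*(w1+w2) := by rw [hseq]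




/-- One step of the full Circles protocol (brakets together with an out
component): first, agents `a` and `b` exchange their kets iff doing so strictly
decreases the minimum weight of their two brakets; second, if exactly one of the
two resulting brakets is diagonal, say equal to `(i,i)`, the out components of
both agents are set to `i`. All other agents are unchanged. -/
def fullStep (k n : ℕ) (st : Fin n → (Fin k × Fin k) × Fin k) (a b : Fin n) :
    Fin n → (Fin k × Fin k) × Fin k :=
  let ba := (st a).1
  let bb := (st b).1
  let q : (Fin k × Fin k) × (Fin k × Fin k) :=
    if min (weight k (ba.1, bb.2)) (weight k (bb.1, ba.2)) <
        min (weight k ba) (weight k bb)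
    then ((ba.1, bb.2), (bb.1, ba.2))
    else (ba, bb)
  let o : Fin k × Fin k :=
    if q.1.1 = q.1.2 ∧ q.2.1 ≠ q.2.2 then (q.1.1, q.1.1)
    else if q.2.1 = q.2.2 ∧ q.1.1 ≠ q.1.2 then (q.2.1, q.2.1)
    else ((st a).2, (st b).2)
  Function.update (Function.update st a (q.1, o.1)) b (q.2, o.2)

def swapCond (k n : ℕ) (st : Fin n → (Fin k × Fin k) × Fin k) (a b : Fin n) : Prop :=
  min (weight k ((st a).1.1, (st b).1.2)) (weight k ((st b).1.1, (st a).1.2)) <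
    min (weight k (st a).1) (weight k (st b).1)

instance (k n : ℕ) (st : Fin n → (Fin k × Fin k) × Fin k) (a b : Fin n) :
    Decidable (swapCond k n st a b) := by unfold swapCond; infer_instance

def qfun (k n : ℕ) (st : Fin n → (Fin k × Fin k) × Fin k) (a b : Fin n) :
    (Fin k × Fin k) × (Fin k × Fin k) :=
  if swapCond k n st a b
  then (((st a).1.1, (st b).1.2), ((st b).1.1, (st a).1.2))
  else ((st a).1, (st b).1)

def ofun (k n : ℕ) (st : Fin n → (Fin k × Fin k) × Fin k) (a b : Fin n) :
    Fin k × Fin k :=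
  let q := qfun k n st a b
  if q.1.1 = q.1.2 ∧ q.2.1 ≠ q.2.2 then (q.1.1, q.1.1)
  else if q.2.1 = q.2.2 ∧ q.1.1 ≠ q.1.2 then (q.2.1, q.2.1)
  else ((st a).2, (st b).2)

lemma fullStep_eq (k n : ℕ) (st : Fin n → (Fin k × Fin k) × Fin k) (a b : Fin n) :
    fullStep k n st a b =
      Function.update (Function.update st a ((qfun k n st a b).1, (ofun k n st a b).1))
        b ((qfun k n st a b).2, (ofun k n st a b).2) := rfl

lemma fullStep_apply_a {k n : ℕ} {st : Fin n → (Fin k × Fin k) × Fin k} {a b : Fin n}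
    (hab : a ≠ b) :
    fullStep k n st a b a = ((qfun k n st a b).1, (ofun k n st a b).1) := by
  rw [fullStep_eq, Function.update_of_ne hab, Function.update_self]

lemma fullStep_apply_b {k n : ℕ} {st : Fin n → (Fin k × Fin k) × Fin k} {a b : Fin n} :
    fullStep k n st a b b = ((qfun k n st a b).2, (ofun k n st a b).2) := by
  rw [fullStep_eq, Function.update_self]

lemma fullStep_apply_other {k n : ℕ} {st : Fin n → (Fin k × Fin k) × Fin k} {a b x : Fin n}
    (hxa : x ≠ a) (hxb : x ≠ b) :
    fullStep k n st a b x = st x := by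
  rw [fullStep_eq, Function.update_of_ne hxb, Function.update_of_ne hxa]

lemma fullStep_fst_of_not {k n : ℕ} {st : Fin n → (Fin k × Fin k) × Fin k} {a b : Fin n}
    (hab : a ≠ b) (h : ¬ swapCond k n st a b) (x : Fin n) :
    (fullStep k n st a b x).1 = (st x).1 := by
  rcases eq_or_ne x a with rfl | hxa
  · rw [fullStep_apply_a hab]; simp [qfun, h]
  · rcases eq_or_ne x b with rfl | hxb
    · rw [fullStep_apply_b]; simp [qfun, h]
    · rw [fullStep_apply_other hxa hxb]
section D
variable {k n : ℕ}

lemma weight_modeq' (hk : 0 < k) (p : Fin k × Fin k) :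
    weight k p ≡ (p.2.val + k - p.1.val) [MOD k] := by
  rcases p with ⟨i, j⟩; exact weight_modeq hk i j

noncomputable def pot (k n : ℕ) (st : Fin n → (Fin k × Fin k) × Fin k) : ℕ :=
  ∑ x : Fin n, ((2*k*k+1) * weight k (st x).1 - weight k (st x).1 * weight k (st x).1)

lemma pot_congr {st st' : Fin n → (Fin k × Fin k) × Fin k}
    (h : ∀ x, (st' x).1 = (st x).1) : pot k n st' = pot k n st := by
  unfold pot
  exact Finset.sum_congr rfl (fun x _ => by rw [h x])

lemma pot_decrease (hk : 0 < k) {st : Fin n → (Fin k × Fin k) × Fin k} {a b : Fin n}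
    (hab : a ≠ b) (h : swapCond k n st a b) :
    pot k n (fullStep k n st a b) < pot k n st := by
  set F : ((Fin k × Fin k) × Fin k) → ℕ :=
    fun v => (2*k*k+1) * weight k v.1 - weight k v.1 * weight k v.1 with hF
  have key : ∀ g : Fin n → ((Fin k × Fin k) × Fin k),
      ∑ x : Fin n, F (g x)
        = F (g b) + (F (g a) + ∑ x ∈ (Finset.univ.erase b).erase a, F (g x)) := by
    intro g
    rw [← Finset.sum_erase_add Finset.univ _ (Finset.mem_univ b),
      ← Finset.sum_erase_add (Finset.univ.erase b) _
        (Finset.mem_erase.mpr ⟨hab, Finset.mem_univ a⟩)]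
    ring
  have hpot : ∀ g, pot k n g = ∑ x : Fin n, F (g x) := fun g => rfl
  rw [hpot, hpot, key, key]
  have hrest : ∑ x ∈ (Finset.univ.erase b).erase a, F (fullStep k n st a b x)
      = ∑ x ∈ (Finset.univ.erase b).erase a, F (st x) := by
    refine Finset.sum_congr rfl (fun x hx => ?_)
    rcases Finset.mem_erase.mp hx with ⟨hxa, hx2⟩
    rcases Finset.mem_erase.mp hx2 with ⟨hxb, _⟩
    rw [fullStep_apply_other hxa hxb]
  rw [hrest]
  have hq : qfun k n st a b
      = (((st a).1.1, (st b).1.2), ((st b).1.1, (st a).1.2)) := by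
    unfold qfun; rw [if_pos h]
  have hna : (fullStep k n st a b a).1 = ((st a).1.1, (st b).1.2) := by
    rw [fullStep_apply_a hab, hq]
  have hnb : (fullStep k n st a b b).1 = ((st b).1.1, (st a).1.2) := by
    rw [fullStep_apply_b, hq]
  have hmain : F (fullStep k n st a b b) + F (fullStep k n st a b a)
      < F (st b) + F (st a) := by
    simp only [hF, hna, hnb]
    refine swap_potential (weight_pos hk _) (weight_le hk _) (weight_pos hk _)
      (weight_le hk _) (weight_pos hk _) (weight_le hk _) (weight_pos hk _)
      (weight_le hk _) ?_ ?_
    · have m1 := weight_modeq' hk ((st b).1.1, (st a).1.2)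
      have m2 := weight_modeq' hk ((st a).1.1, (st b).1.2)
      have m3 := (weight_modeq' hk (st b).1).symm
      have m4 := (weight_modeq' hk (st a).1).symm
      have heq : ((st a).1.2.val + k - (st b).1.1.val) + ((st b).1.2.val + k - (st a).1.1.val)
          = ((st b).1.2.val + k - (st b).1.1.val) + ((st a).1.2.val + k - (st a).1.1.val) := by
        have := (st a).1.1.isLt; have := (st a).1.2.isLt
        have := (st b).1.1.isLt; have := (st b).1.2.isLt
        omega
      calc weight k ((st b).1.1, (st a).1.2) + weight k ((st a).1.1, (st b).1.2)
          ≡ ((st a).1.2.val + k - (st b).1.1.val) + ((st b).1.2.val + k - (st a).1.1.val)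
            [MOD k] := Nat.ModEq.add m1 m2
        _ = ((st b).1.2.val + k - (st b).1.1.val) + ((st a).1.2.val + k - (st a).1.1.val) := heq
        _ ≡ weight k (st b).1 + weight k (st a).1 [MOD k] := Nat.ModEq.add m3 m4
    · unfold swapCond at h
      rw [Nat.min_comm (weight k ((st b).1.1, (st a).1.2)),
        Nat.min_comm (weight k (st b).1)]
      exact h
  omega

lemma pot_nonincreasing (hk : 0 < k) {st : Fin n → (Fin k × Fin k) × Fin k} {a b : Fin n}
    (hab : a ≠ b) : pot k n (fullStep k n st a b) ≤ pot k n st := by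
  by_cases h : swapCond k n st a b
  · exact le_of_lt (pot_decrease hk hab h)
  · exact le_of_eq (pot_congr (fullStep_fst_of_not hab h))

lemma anti_eventually_const (f : ℕ → ℕ) (h : ∀ t, f (t+1) ≤ f t) :
    ∃ T, ∀ t, T ≤ t → f t = f T := by
  have hmono : ∀ s t, s ≤ t → f t ≤ f s := by
    intro s t hst
    induction t, hst using Nat.le_induction with
    | base => exact le_refl _
    | succ m hm ih => exact le_trans (h m) ih
  have hne : (Set.range f).Nonempty := ⟨f 0, 0, rfl⟩
  obtain ⟨T, hT⟩ := Nat.sInf_mem hne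
  refine ⟨T, fun t ht => le_antisymm (hmono T t ht) ?_⟩
  rw [hT]
  exact Nat.sInf_le ⟨t, rfl⟩

end D

def covN (k : ℕ) (p : Fin k × Fin k) (e : Fin k) : ℕ :=
  if (e.val + k - p.1.val) % k < weight k p then 1 else 0

lemma tel (k : ℕ) (hk : 0 < k) (p : Fin k × Fin k) (x y : Fin k)
    (hy : y.val = (x.val + 1) % k) :
    covN k p y + (if p.2 = y then 1 else 0)
      = covN k p x + (if p.1 = y then 1 else 0) := by
  rcases p with ⟨i, j⟩
  have hI := i.isLt; have hJ := j.isLt; have hE := x.isLt; have hY := y.isLt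
  simp only [covN, weight, Fin.ext_iff]
  rw [modk hk (x.val + 1) (by omega)] at hy
  rw [modk hk (y.val + k - i.val) (by omega), modk hk (x.val + k - i.val) (by omega)]
  by_cases hij : i.val = j.val
  · simp only [hij, if_pos rfl]
    have : (j.val : ℕ) = i.val := hij.symm
    split_ifs at hy ⊢ <;> omega
  · rw [if_neg (by omega : ¬ (i.val : ℕ) = j.val)]
    rw [modk hk (j.val + k - i.val) (by omega)]
    split_ifs at hy ⊢ <;> omega

section E
variable {k n : ℕ}

lemma weight_eq_of_ne' {p : Fin k × Fin k} (h : p.1 ≠ p.2) :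
    weight k p = (p.2.val + k - p.1.val) % k := by
  simp only [weight]; rw [if_neg h]

lemma weight_diag {p : Fin k × Fin k} (h : p.1 = p.2) : weight k p = k := by
  simp only [weight]; rw [if_pos h]

lemma modsub_self (hk : 0 < k) (x : Fin k) : (x.val + k - x.val) % k = 0 := by
  have : x.val + k - x.val = k := by omega
  rw [this, Nat.mod_self]

lemma modsub_eq_zero_iff (hk : 0 < k) (x y : Fin k) :
    (x.val + k - y.val) % k = 0 ↔ x = y := by
  have hx := x.isLt; have hy := y.isLt
  rw [modk hk _ (by omega), Fin.ext_iff]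
  split_ifs <;> omega

lemma covN_of_bra (hk : 0 < k) {p : Fin k × Fin k} {e : Fin k} (h : p.1 = e) :
    covN k p e = 1 := by
  unfold covN
  rw [if_pos]
  rw [← h, modsub_self hk]
  exact weight_pos hk p

lemma covN_of_diag (hk : 0 < k) {p : Fin k × Fin k} (h : p.1 = p.2) (e : Fin k) :
    covN k p e = 1 := by
  unfold covN
  rw [if_pos]
  rw [weight_diag h]
  exact Nat.mod_lt _ hk

open Fin.NatCast in
lemma fin_cycle_const [NeZero k] (f : Fin k → ℕ)
    (hstep : ∀ x : Fin k, f (x + 1) = f x) : ∀ x y : Fin k, f x = f y := by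
  have key : ∀ (s : ℕ) (x : Fin k), f (x + (s : Fin k)) = f x := by
    intro s
    induction s with
    | zero => intro x; simp
    | succ m ih =>
        intro x
        have hc : ((m + 1 : ℕ) : Fin k) = (m : Fin k) + 1 := by push_cast; ring
        rw [hc, ← add_assoc, hstep, ih]
  intro x y
  have h1 : x + (((y - x).val : ℕ) : Fin k) = y := by
    rw [Fin.cast_val_eq_self, add_comm, sub_add_cancel]
  calc f x = f (x + (((y - x).val : ℕ) : Fin k)) := (key _ x).symm
    _ = f y := by rw [h1]

/-- Analysis of a stable configuration: diagonals exist and all carry the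
plurality color. -/
lemma stable_analysis (hk2 : 2 ≤ k) (hn : 1 ≤ n)
    (A : Fin n → Fin k × Fin k) (c : Fin n → Fin k)
    (hbra : ∀ a, (A a).1 = c a)
    (hket : ∀ y : Fin k, (Finset.univ.filter fun a => (A a).2 = y).card
        = (Finset.univ.filter fun a => c a = y).card)
    (hstab : ∀ a b : Fin n, a ≠ b →
      ¬ (min (weight k ((A a).1, (A b).2)) (weight k ((A b).1, (A a).2)) <
          min (weight k (A a)) (weight k (A b))))
    (μ : Fin k)
    (hmaj : ∀ j : Fin k, j ≠ μ →
      (Finset.univ.filter (fun a => c a = j)).card <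
        (Finset.univ.filter (fun a => c a = μ)).card) :
    (∃ d, (A d).1 = (A d).2) ∧ (∀ d, (A d).1 = (A d).2 → (A d).1 = μ) := by
  have hk : 0 < k := by omega
  haveI : NeZero k := ⟨by omega⟩
  -- coverage is constant
  have hNconst : ∀ x y : Fin k,
      (∑ a : Fin n, covN k (A a) x) = (∑ a : Fin n, covN k (A a) y) := by
    apply fin_cycle_const (fun e => ∑ a : Fin n, covN k (A a) e)
    intro x
    have hy : (x + 1 : Fin k).val = (x.val + 1) % k := by
      rw [Fin.add_def]
      simp only [Fin.val_one']
      rw [Nat.mod_eq_of_lt (show 1 < k by omega)]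
    have hsum : (∑ a : Fin n, covN k (A a) (x+1))
          + (Finset.univ.filter fun a => (A a).2 = x+1).card
        = (∑ a : Fin n, covN k (A a) x)
          + (Finset.univ.filter fun a => (A a).1 = x+1).card := by
      rw [Finset.card_filter, Finset.card_filter,
        ← Finset.sum_add_distrib, ← Finset.sum_add_distrib]
      exact Finset.sum_congr rfl (fun a _ => tel k hk (A a) x (x+1) hy)
    have hbcount : (Finset.univ.filter fun a => (A a).1 = x+1).card
        = (Finset.univ.filter fun a => c a = x+1).card := by
      congr 1
      apply Finset.filter_congr
      intro a _
      rw [hbra a]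
    rw [hket (x+1), hbcount] at hsum
    omega
  have hNge : ∀ x : Fin k,
      (Finset.univ.filter (fun a => c a = x)).card ≤ ∑ a : Fin n, covN k (A a) x := by
    intro x
    rw [Finset.card_filter]
    apply Finset.sum_le_sum
    intro a _
    split_ifs with h
    · exact le_of_eq (covN_of_bra hk ((hbra a).trans h)).symm
    · exact Nat.zero_le _
  by_cases hdiag : ∃ d, (A d).1 = (A d).2
  · obtain ⟨d, hd⟩ := hdiag
    have hL1 : ∀ d', (A d').1 = (A d').2 → (A d').1 = (A d).1 := by
      intro d' hd'
      by_contra hne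
      have hdd : d ≠ d' := fun h => hne (by rw [← h])
      apply hstab d d' hdd
      have hcross : weight k ((A d).1, (A d').2) < k := by
        apply weight_lt hk
        rw [← hd']
        exact fun h => hne (h.symm)
      calc min (weight k ((A d).1, (A d').2)) (weight k ((A d').1, (A d).2))
          ≤ weight k ((A d).1, (A d').2) := min_le_left _ _
        _ < k := hcross
        _ = min (weight k (A d)) (weight k (A d')) := by
            rw [weight_diag hd, weight_diag hd', min_self]
    have hL2 : ∀ a, ¬ (0 < ((A d).1.val + k - (A a).1.val) % k ∧
        ((A d).1.val + k - (A a).1.val) % k < weight k (A a)) := by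
      rintro a ⟨h1, h2⟩
      have hbne : (A a).1 ≠ (A d).1 := by
        intro h
        rw [h, modsub_self hk] at h1
        omega
      by_cases hda : (A a).1 = (A a).2
      · exact hbne (hL1 a hda)
      have had : d ≠ a := by
        intro h; rw [← h] at hda; exact hda hd
      apply hstab d a had
      have hw2 : weight k ((A a).1, (A d).2)
          = ((A d).1.val + k - (A a).1.val) % k := by
        rw [← hd]
        exact weight_eq_of_ne (fun h => hbne h)
      calc min (weight k ((A d).1, (A a).2)) (weight k ((A a).1, (A d).2))
          ≤ weight k ((A a).1, (A d).2) := min_le_right _ _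
        _ < weight k (A a) := by rw [hw2]; exact h2
        _ = min (weight k (A d)) (weight k (A a)) := by
            rw [weight_diag hd]
            exact (min_eq_right (weight_le hk _)).symm
    -- N at the diagonal point equals C ν
    have hNν : (∑ a : Fin n, covN k (A a) (A d).1)
        = (Finset.univ.filter (fun a => c a = (A d).1)).card := by
      rw [Finset.card_filter]
      apply Finset.sum_congr rfl
      intro a _
      by_cases hb : (A a).1 = (A d).1
      · rw [covN_of_bra hk hb, if_pos ((hbra a).symm.trans hb)]
      · rw [if_neg (fun h => hb ((hbra a).trans h))]
        unfold covN
        rw [if_neg]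
        intro hcov
        apply hL2 a
        constructor
        · rcases Nat.eq_zero_or_pos (((A d).1.val + k - (A a).1.val) % k) with h0 | h0
          · exact absurd ((modsub_eq_zero_iff hk _ _).mp h0).symm hb
          · exact h0
        · exact hcov
    have hNx : ∀ x : Fin k, x ≠ (A d).1 →
        (Finset.univ.filter (fun a => c a = x)).card + 1
          ≤ ∑ a : Fin n, covN k (A a) x := by
      intro x hx
      have hpoint : ∀ a : Fin n,
          (if c a = x then 1 else 0) + (if a = d then 1 else 0) ≤ covN k (A a) x := by
        intro a
        by_cases hda : a = d
        · subst hda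
          rw [covN_of_diag hk hd, if_neg (fun h => hx (((hbra a).trans h).symm)),
            if_pos rfl]
        · rw [if_neg hda]
          split_ifs with h
          · rw [covN_of_bra hk ((hbra a).trans h)]
          · simp
      calc (Finset.univ.filter (fun a => c a = x)).card + 1
          = (∑ a : Fin n, if c a = x then 1 else 0) + (∑ a : Fin n, if a = d then 1 else 0) := by
            rw [Finset.card_filter]
            congr 1
            rw [Finset.sum_ite_eq' Finset.univ d (fun _ => 1), if_pos (Finset.mem_univ d)]
        _ = ∑ a : Fin n, ((if c a = x then 1 else 0) + (if a = d then 1 else 0)) := by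
            rw [Finset.sum_add_distrib]
        _ ≤ ∑ a : Fin n, covN k (A a) x := Finset.sum_le_sum (fun a _ => hpoint a)
    have hνμ : (A d).1 = μ := by
      by_contra hne
      have h1 := hmaj (A d).1 hne
      have h2 := hNx μ (fun h => hne h.symm)
      rw [hNconst μ (A d).1, hNν] at h2
      omega
    exact ⟨⟨d, hd⟩, fun d' hd' => (hL1 d' hd').trans hνμ⟩
  · -- no diagonal: contradiction with unique plurality
    exfalso
    push_neg at hdiag
    obtain ⟨a0⟩ : Nonempty (Fin n) := ⟨⟨0, hn⟩⟩
    obtain ⟨astar, -, hmax⟩ := Finset.exists_max_image Finset.univ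
      (fun a => weight k (A a)) ⟨a0, Finset.mem_univ a0⟩
    have hmax' : ∀ a, weight k (A a) ≤ weight k (A astar) :=
      fun a => hmax a (Finset.mem_univ a)
    -- the ket of the maximal arc is free
    have hfree_q : ∀ a, ¬ (0 < ((A astar).2.val + k - (A a).1.val) % k ∧
        ((A astar).2.val + k - (A a).1.val) % k < weight k (A a)) := by
      rintro a ⟨h1, h2⟩
      have hbq : (A a).1 ≠ (A astar).2 := by
        intro h
        rw [← h, modsub_self hk] at h1
        omega
      by_cases haa : a = astar
      · subst haa
        rw [← weight_eq_of_ne' (p := A a) (hdiag a)] at h2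
        omega
      · apply hstab astar a (fun h => haa h.symm)
        have hw2 : weight k ((A a).1, (A astar).2)
            = ((A astar).2.val + k - (A a).1.val) % k :=
          weight_eq_of_ne (fun h => hbq h)
        calc min (weight k ((A astar).1, (A a).2)) (weight k ((A a).1, (A astar).2))
            ≤ weight k ((A a).1, (A astar).2) := min_le_right _ _
          _ < weight k (A a) := by rw [hw2]; exact h2
          _ = min (weight k (A astar)) (weight k (A a)) := (min_eq_right (hmax' a)).symm
    -- the bra of the maximal arc is free
    have hfree_p : ∀ a, ¬ (0 < ((A astar).1.val + k - (A a).1.val) % k ∧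
        ((A astar).1.val + k - (A a).1.val) % k < weight k (A a)) := by
      rintro a ⟨h1, h2⟩
      by_cases haa : a = astar
      · subst haa
        rw [modsub_self hk] at h1
        omega
      · have hpket : (A astar).1 ≠ (A a).2 := by
          intro h
          rw [h] at h1 h2
          rw [← weight_eq_of_ne' (p := A a) (hdiag a)] at h2
          omega
        apply hstab a astar haa
        have hw2 : weight k ((A astar).1, (A a).2)
            = ((A a).2.val + k - (A astar).1.val) % k := weight_eq_of_ne hpket
        have hwa : weight k (A a) = ((A a).2.val + k - (A a).1.val) % k :=
          weight_eq_of_ne' (p := A a) (hdiag a)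
        -- v = w - u
        have hv : weight k ((A astar).1, (A a).2) < weight k (A a) := by
          rw [hw2, hwa]
          rw [hwa] at h2
          have hI := (A a).1.isLt; have hJ := (A a).2.isLt; have hP := (A astar).1.isLt
          have e1 := modk hk ((A astar).1.val + k - (A a).1.val) (by omega)
          have e2 := modk hk ((A a).2.val + k - (A astar).1.val) (by omega)
          have e3 := modk hk ((A a).2.val + k - (A a).1.val) (by omega)
          rw [e1] at h1 h2
          rw [e2, e3]
          rw [e3] at h2
          split_ifs at * <;> omega
        calc min (weight k ((A a).1, (A astar).2)) (weight k ((A astar).1, (A a).2))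
            ≤ weight k ((A astar).1, (A a).2) := min_le_right _ _
          _ < weight k (A a) := hv
          _ = min (weight k (A a)) (weight k (A astar)) := (min_eq_left (hmax' a)).symm
    -- N at a free point x₀ equals C x₀
    have hfreeN : ∀ x : Fin k,
        (∀ a, ¬ (0 < (x.val + k - (A a).1.val) % k ∧
          (x.val + k - (A a).1.val) % k < weight k (A a))) →
        (∑ a : Fin n, covN k (A a) x)
          = (Finset.univ.filter (fun a => c a = x)).card := by
      intro x hfree
      rw [Finset.card_filter]
      apply Finset.sum_congr rfl
      intro a _
      by_cases hb : (A a).1 = x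
      · rw [covN_of_bra hk hb, if_pos ((hbra a).symm.trans hb)]
      · rw [if_neg (fun h => hb ((hbra a).trans h))]
        unfold covN
        rw [if_neg]
        intro hcov
        apply hfree a
        refine ⟨?_, hcov⟩
        rcases Nat.eq_zero_or_pos ((x.val + k - (A a).1.val) % k) with h0 | h0
        · exact absurd ((modsub_eq_zero_iff hk _ _).mp h0).symm hb
        · exact h0
    have hNp := hfreeN (A astar).1 hfree_p
    have hNq := hfreeN (A astar).2 hfree_q
    have hpq : (A astar).1 ≠ (A astar).2 := hdiag astar
    have hCpq : (Finset.univ.filter (fun a => c a = (A astar).1)).card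
        = (Finset.univ.filter (fun a => c a = (A astar).2)).card := by
      rw [← hNp, ← hNq]
      exact hNconst _ _
    rcases eq_or_ne (A astar).1 μ with hpμ | hpμ
    · have hqμ : (A astar).2 ≠ μ := fun h => hpq (hpμ.trans h.symm)
      have := hmaj _ hqμ
      rw [← hpμ] at this
      omega
    · have h1 := hmaj _ hpμ
      have h2 : (Finset.univ.filter (fun a => c a = μ)).card
          ≤ (Finset.univ.filter (fun a => c a = (A astar).1)).card := by
        rw [← hNp]
        calc (Finset.univ.filter (fun a => c a = μ)).card
            ≤ ∑ a : Fin n, covN k (A a) μ := hNge μ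
          _ = ∑ a : Fin n, covN k (A a) (A astar).1 := hNconst _ _
      omega
end E
section F
variable {k n : ℕ}

lemma qfun_fst_a {st : Fin n → (Fin k × Fin k) × Fin k} {a b : Fin n} :
    (qfun k n st a b).1.1 = (st a).1.1 := by unfold qfun; split_ifs <;> rfl

lemma qfun_fst_b {st : Fin n → (Fin k × Fin k) × Fin k} {a b : Fin n} :
    (qfun k n st a b).2.1 = (st b).1.1 := by unfold qfun; split_ifs <;> rfl

lemma qfun_of_swap {st : Fin n → (Fin k × Fin k) × Fin k} {a b : Fin n}
    (h : swapCond k n st a b) :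
    qfun k n st a b = (((st a).1.1, (st b).1.2), ((st b).1.1, (st a).1.2)) := by
  unfold qfun; rw [if_pos h]

lemma qfun_of_not {st : Fin n → (Fin k × Fin k) × Fin k} {a b : Fin n}
    (h : ¬ swapCond k n st a b) :
    qfun k n st a b = ((st a).1, (st b).1) := by
  unfold qfun; rw [if_neg h]

lemma ofun_def (st : Fin n → (Fin k × Fin k) × Fin k) (a b : Fin n) :
    ofun k n st a b =
      if (qfun k n st a b).1.1 = (qfun k n st a b).1.2 ∧
          (qfun k n st a b).2.1 ≠ (qfun k n st a b).2.2
      then ((qfun k n st a b).1.1, (qfun k n st a b).1.1)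
      else if (qfun k n st a b).2.1 = (qfun k n st a b).2.2 ∧
          (qfun k n st a b).1.1 ≠ (qfun k n st a b).1.2
      then ((qfun k n st a b).2.1, (qfun k n st a b).2.1)
      else ((st a).2, (st b).2) := rfl

lemma filter_perm_card (π : Equiv.Perm (Fin n)) (p : Fin n → Prop) [DecidablePred p] :
    (Finset.univ.filter fun a => p (π a)).card = (Finset.univ.filter p).card := by
  refine Finset.card_bij' (fun a _ => π a) (fun b _ => π.symm b) ?_ ?_ ?_ ?_
  · intro a ha
    simp only [Finset.mem_filter, Finset.mem_univ, true_and] at ha ⊢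
    exact ha
  · intro b hb
    simp only [Finset.mem_filter, Finset.mem_univ, true_and] at hb ⊢
    simpa using hb
  · intro a _
    simp
  · intro b _
    simp
end F

/-- (Correctness of the Circles protocol for relative majority) Under a weakly
fair schedule, if `μ` is the unique color in relative majority, then eventually
the out component of every agent equals `μ` forever. -/
theorem stmt8 (k n : ℕ) (hk : 1 ≤ k) (hn : 1 ≤ n)
    (c : Fin n → Fin k) (sch : ℕ → Fin n × Fin n)
    (hsch : ∀ t, (sch t).1 ≠ (sch t).2)
    (hfair : ∀ p : Fin n × Fin n, p.1 ≠ p.2 → ∀ t₀ : ℕ, ∃ t, t₀ ≤ t ∧ sch t = p)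
    (σ : ℕ → Fin n → (Fin k × Fin k) × Fin k)
    (hinit : ∀ a, σ 0 a = ((c a, c a), c a))
    (hstep : ∀ t, σ (t + 1) = fullStep k n (σ t) (sch t).1 (sch t).2)
    (μ : Fin k)
    (hmaj : ∀ j : Fin k, j ≠ μ →
      (Finset.univ.filter (fun a => c a = j)).card <
        (Finset.univ.filter (fun a => c a = μ)).card) :
    ∃ T : ℕ, ∀ t ≥ T, ∀ a : Fin n, (σ t a).2 = μ := by
  rcases Nat.lt_or_ge k 2 with hk1 | hk2
  · have hk1' : k = 1 := by omega
    subst hk1'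
    exact ⟨0, fun t _ a => Subsingleton.elim _ _⟩
  have hk0 : 0 < k := by omega
  -- bras are invariant
  have hbra : ∀ t x, (σ t x).1.1 = c x := by
    intro t
    induction t with
    | zero => intro x; rw [hinit x]
    | succ t ih =>
        intro x
        rw [hstep t]
        rcases eq_or_ne x (sch t).1 with rfl | hx1
        · rw [fullStep_apply_a (hsch t)]
          show (qfun k n (σ t) (sch t).1 (sch t).2).1.1 = c (sch t).1
          rw [qfun_fst_a]
          exact ih (sch t).1
        · rcases eq_or_ne x (sch t).2 with rfl | hx2
          · rw [fullStep_apply_b]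
            show (qfun k n (σ t) (sch t).1 (sch t).2).2.1 = c (sch t).2
            rw [qfun_fst_b]
            exact ih (sch t).2
          · rw [fullStep_apply_other hx1 hx2]; exact ih x
  -- kets are a permutation of the colors
  have hketp : ∀ t, ∃ π : Equiv.Perm (Fin n), ∀ x, (σ t x).1.2 = c (π x) := by
    intro t
    induction t with
    | zero => exact ⟨Equiv.refl _, fun x => by rw [hinit x]; rfl⟩
    | succ t ih =>
        obtain ⟨π, hπ⟩ := ih
        by_cases hs : swapCond k n (σ t) (sch t).1 (sch t).2
        · refine ⟨(Equiv.swap (sch t).1 (sch t).2).trans π, ?_⟩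
          intro x
          rw [hstep t]
          rcases eq_or_ne x (sch t).1 with rfl | hx1
          · rw [fullStep_apply_a (hsch t)]
            show (qfun k n (σ t) (sch t).1 (sch t).2).1.2 = _
            rw [qfun_of_swap hs]
            show (σ t (sch t).2).1.2 = _
            have he : ((Equiv.swap (sch t).1 (sch t).2).trans π) (sch t).1 = π (sch t).2 := by
              rw [Equiv.trans_apply, Equiv.swap_apply_left]
            rw [he]
            exact hπ (sch t).2
          · rcases eq_or_ne x (sch t).2 with rfl | hx2
            · rw [fullStep_apply_b]
              show (qfun k n (σ t) (sch t).1 (sch t).2).2.2 = _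
              rw [qfun_of_swap hs]
              show (σ t (sch t).1).1.2 = _
              have he : ((Equiv.swap (sch t).1 (sch t).2).trans π) (sch t).2 = π (sch t).1 := by
                rw [Equiv.trans_apply, Equiv.swap_apply_right]
              rw [he]
              exact hπ (sch t).1
            · rw [fullStep_apply_other hx1 hx2]
              have he : ((Equiv.swap (sch t).1 (sch t).2).trans π) x = π x := by
                rw [Equiv.trans_apply, Equiv.swap_apply_of_ne_of_ne hx1 hx2]
              rw [he]
              exact hπ x
        · refine ⟨π, fun x => ?_⟩
          rw [hstep t]
          have h := fullStep_fst_of_not (hsch t) hs x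
          rw [h]
          exact hπ x
  -- potential stabilizes
  obtain ⟨T₀, hT₀⟩ := anti_eventually_const (fun t => pot k n (σ t))
      (fun t => by show pot k n (σ (t+1)) ≤ pot k n (σ t); rw [hstep t]; exact pot_nonincreasing hk0 (hsch t))
  have hnoswap : ∀ t, T₀ ≤ t → ¬ swapCond k n (σ t) (sch t).1 (sch t).2 := by
    intro t ht hs
    have hdec := pot_decrease hk0 (hsch t) hs
    rw [← hstep t] at hdec
    have e1 : pot k n (σ t) = pot k n (σ T₀) := hT₀ t ht
    have e2 : pot k n (σ (t+1)) = pot k n (σ T₀) := hT₀ (t+1) (by omega)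
    omega
  have hfrozen : ∀ t, T₀ ≤ t → ∀ x, (σ t x).1 = (σ T₀ x).1 := by
    intro t ht
    induction t, ht using Nat.le_induction with
    | base => intro x; rfl
    | succ m hm ih =>
        intro x
        rw [hstep m, fullStep_fst_of_not (hsch m) (hnoswap m hm) x]
        exact ih x
  -- stability of the frozen configuration
  have hstab : ∀ a b : Fin n, a ≠ b →
      ¬ (min (weight k ((σ T₀ a).1.1, (σ T₀ b).1.2))
            (weight k ((σ T₀ b).1.1, (σ T₀ a).1.2)) <
          min (weight k (σ T₀ a).1) (weight k (σ T₀ b).1)) := by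
    intro a b hab hlt
    obtain ⟨t, ht, hts⟩ := hfair (a, b) hab T₀
    apply hnoswap t ht
    unfold swapCond
    rw [hts]
    show min (weight k ((σ t a).1.1, (σ t b).1.2))
          (weight k ((σ t b).1.1, (σ t a).1.2)) <
        min (weight k (σ t a).1) (weight k (σ t b).1)
    rw [hfrozen t ht a, hfrozen t ht b]
    exact hlt
  -- apply the stable configuration analysis
  obtain ⟨π, hπ⟩ := hketp T₀
  have hketc : ∀ y : Fin k, (Finset.univ.filter fun a => ((σ T₀ a).1).2 = y).card
      = (Finset.univ.filter fun a => c a = y).card := by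
    intro y
    have h1 : (Finset.univ.filter fun a => ((σ T₀ a).1).2 = y)
        = (Finset.univ.filter fun a => c (π a) = y) := by
      apply Finset.filter_congr
      intro a _
      rw [hπ a]
    rw [h1]
    exact filter_perm_card π (fun a => c a = y)
  obtain ⟨⟨d₀, hd₀⟩, hall⟩ := stable_analysis hk2 hn (fun x => (σ T₀ x).1) c
      (fun a => hbra T₀ a) hketc hstab μ hmaj
  by_cases hmix : ∀ x, (σ T₀ x).1.1 = (σ T₀ x).1.2
  · -- all diagonal: unanimous input
    have hcall : ∀ x, c x = μ := fun x => (hbra T₀ x).symm.trans (hall x (hmix x))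
    have hglob : ∀ t x, σ t x = ((μ, μ), μ) := by
      intro t
      induction t with
      | zero => intro x; rw [hinit x, hcall x]
      | succ t ih =>
          intro x
          rw [hstep t]
          have hq : qfun k n (σ t) (sch t).1 (sch t).2 = ((μ,μ),(μ,μ)) := by
            unfold qfun
            rw [ih (sch t).1, ih (sch t).2]
            split_ifs <;> rfl
          have ho : ofun k n (σ t) (sch t).1 (sch t).2 = (μ, μ) := by
            rw [ofun_def, hq, ih (sch t).1, ih (sch t).2]
            simp
          rcases eq_or_ne x (sch t).1 with rfl | hx1
          · rw [fullStep_apply_a (hsch t), hq, ho]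
          · rcases eq_or_ne x (sch t).2 with rfl | hx2
            · rw [fullStep_apply_b, hq, ho]
            · rw [fullStep_apply_other hx1 hx2]; exact ih x
    exact ⟨0, fun t _ x => by rw [hglob t x]⟩
  · -- mixed configuration
    push_neg at hmix
    obtain ⟨b₀, hb₀⟩ := hmix
    have hmono : ∀ t, T₀ ≤ t → ∀ x, (σ t x).2 = μ → (σ (t+1) x).2 = μ := by
      intro t ht x hx
      rw [hstep t]
      have hq := qfun_of_not (hnoswap t ht)
      have hdiagval : ∀ y, (σ t y).1.1 = (σ t y).1.2 → (σ t y).1.1 = μ := by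
        intro y hy
        rw [hfrozen t ht y] at hy ⊢
        exact hall y hy
      rcases eq_or_ne x (sch t).1 with rfl | hx1
      · rw [fullStep_apply_a (hsch t)]
        show (ofun k n (σ t) (sch t).1 (sch t).2).1 = μ
        rw [ofun_def, hq]
        split_ifs with h1 h2
        · exact hdiagval _ h1.1
        · exact hdiagval _ h2.1
        · exact hx
      · rcases eq_or_ne x (sch t).2 with rfl | hx2
        · rw [fullStep_apply_b]
          show (ofun k n (σ t) (sch t).1 (sch t).2).2 = μ
          rw [ofun_def, hq]
          split_ifs with h1 h2
          · exact hdiagval _ h1.1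
          · exact hdiagval _ h2.1
          · exact hx
        · rw [fullStep_apply_other hx1 hx2]; exact hx
    have hkeep : ∀ x s t', T₀ ≤ s → (σ s x).2 = μ → s ≤ t' → (σ t' x).2 = μ := by
      intro x s t' hs hout hst
      induction t', hst using Nat.le_induction with
      | base => exact hout
      | succ m hm ih => exact hmono m (le_trans hs hm) x ih
    have hset : ∀ x, ∃ t, T₀ ≤ t ∧ (σ (t+1) x).2 = μ := by
      intro x
      by_cases hxd : (σ T₀ x).1.1 = (σ T₀ x).1.2
      · have hxb : x ≠ b₀ := by
          intro h; rw [h] at hxd; exact hb₀ hxd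
        obtain ⟨t, ht, hts⟩ := hfair (x, b₀) hxb T₀
        refine ⟨t, ht, ?_⟩
        rw [hstep t, hts]
        show (fullStep k n (σ t) x b₀ x).2 = μ
        rw [fullStep_apply_a hxb]
        show (ofun k n (σ t) x b₀).1 = μ
        have h := hnoswap t ht
        rw [hts] at h
        rw [ofun_def, qfun_of_not h]
        have hc1 : (σ t x).1.1 = (σ t x).1.2 := by rw [hfrozen t ht x]; exact hxd
        have hc2 : (σ t b₀).1.1 ≠ (σ t b₀).1.2 := by rw [hfrozen t ht b₀]; exact hb₀
        rw [if_pos ⟨hc1, hc2⟩]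
        show (σ t x).1.1 = μ
        rw [hfrozen t ht x]
        exact hall x hxd
      · have hxd0 : x ≠ d₀ := fun h => hxd (h ▸ hd₀)
        obtain ⟨t, ht, hts⟩ := hfair (x, d₀) hxd0 T₀
        refine ⟨t, ht, ?_⟩
        rw [hstep t, hts]
        show (fullStep k n (σ t) x d₀ x).2 = μ
        rw [fullStep_apply_a hxd0]
        show (ofun k n (σ t) x d₀).1 = μ
        have h := hnoswap t ht
        rw [hts] at h
        rw [ofun_def, qfun_of_not h]
        have hc1 : ¬ ((σ t x).1.1 = (σ t x).1.2) := by rw [hfrozen t ht x]; exact hxd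
        have hc2 : (σ t d₀).1.1 = (σ t d₀).1.2 := by rw [hfrozen t ht d₀]; exact hd₀
        rw [if_neg (fun hcon => hc1 hcon.1), if_pos ⟨hc2, hc1⟩]
        show (σ t d₀).1.1 = μ
        rw [hfrozen t ht d₀]
        exact hall d₀ hd₀
    classical
    choose g hg1 hg2 using hset
    refine ⟨Finset.univ.sup (fun x => g x + 1), ?_⟩
    intro t ht x
    have hx : g x + 1 ≤ t := le_trans (Finset.le_sup (f := fun x => g x + 1) (Finset.mem_univ x)) ht
    exact hkeep x (g x + 1) t (by have := hg1 x; omega) (hg2 x) hx
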